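/- (No arbitrage sub-domain for SSVI.) Let ρ ∈ (−1,1), γ = √(1−ρ²), μ = −ρ/√(1−ρ²), and b > 0 with b·(1+|ρ|) < 2. Let M = sup_{l ∈ ℝ} (−g₂(l)), which is finite and positive (it is attained at the unique minimum point m₂ of g₂ to the right of the positive zero l₂ of g₂). If σ ≥ 8·b·M / (4 − b²·(1+|ρ|)²), then the SSVI is arbitrage-free. -/

import Mathlib

/-!
For SSVI the function `h` is explicit, `h(l) = 1/2 + 1/(2γ√(l²+1)) ≥ 1/2`, while
`|b·g| ≤ b(1+|ρ|)/4 < 1/2`. So both Fukasawa factors are positive and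
`G₁ = h² - (b·g)² ≥ (4 - b²(1+|ρ|)²)/16`. Since `N ≥ γ + √(1-ρ²)` (Cauchy–Schwarz) and `N'' > 0`,
`-g₂ ≤ N'²/(2N) ≤ (1+|ρ|)²/(2γ)`, so `M` is finite, and it is positive because `-g₂ > 0` far in
the right wing. The bound on `σ` makes `(b/(2σ))·M` at most the lower bound of `G₁`.
-/

/-- SVI normalized total variance shape: `N(l) = γ + ρ·l + √(l²+1)`. -/
noncomputable def Nf (γ ρ l : ℝ) : ℝ := γ + ρ * l + Real.sqrt (l ^ 2 + 1)

/-- `N'(l) = ρ + l/√(l²+1)`. -/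
noncomputable def Nf' (ρ l : ℝ) : ℝ := ρ + l / Real.sqrt (l ^ 2 + 1)

/-- `N''(l) = (l²+1)^(−3/2)`. -/
noncomputable def Nf'' (l : ℝ) : ℝ := (l ^ 2 + 1) ^ (-(3 : ℝ) / 2)

/-- `h(l) = 1 − N'(l)·(l+μ)/(2N(l))`. -/
noncomputable def hf (γ ρ μ l : ℝ) : ℝ := 1 - Nf' ρ l * (l + μ) / (2 * Nf γ ρ l)

/-- `g(l) = N'(l)/4`. -/
noncomputable def gf (ρ l : ℝ) : ℝ := Nf' ρ l / 4

/-- `g₂(l) = N''(l) − N'(l)²/(2N(l))`. -/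
noncomputable def g2 (γ ρ l : ℝ) : ℝ := Nf'' l - (Nf' ρ l) ^ 2 / (2 * Nf γ ρ l)

/-- `G₁(l) = (h(l) − b·g(l))·(h(l) + b·g(l))`. -/
noncomputable def G1 (γ b ρ μ l : ℝ) : ℝ :=
  (hf γ ρ μ l - b * gf ρ l) * (hf γ ρ μ l + b * gf ρ l)

/-- Fukasawa (weak no-arbitrage) conditions: both factors of `G₁` are positive on `ℝ`. -/
def FukasawaCond (γ b ρ μ : ℝ) : Prop :=
  ∀ l : ℝ, 0 < hf γ ρ μ l - b * gf ρ l ∧ 0 < hf γ ρ μ l + b * gf ρ l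

/-- No Butterfly arbitrage (Martini–Mingone characterization): Fukasawa conditions plus
`G₁ + (b/(2σ))·g₂ ≥ 0` on `ℝ`. -/
def ArbitrageFree (γ b ρ μ σ : ℝ) : Prop :=
  FukasawaCond γ b ρ μ ∧ ∀ l : ℝ, 0 ≤ G1 γ b ρ μ l + b / (2 * σ) * g2 γ ρ l

open Real

section SVI

variable {γ ρ μ b : ℝ}

lemma sqrt_one_sub_sq_le_mul_add_sqrt (hρ : ρ ^ 2 ≤ 1) (l : ℝ) :
    √(1 - ρ ^ 2) ≤ ρ * l + √(l ^ 2 + 1) := by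
  have hsq : (√(1 - ρ ^ 2) - ρ * l) ^ 2 ≤ l ^ 2 + 1 := by
    rw [sub_sq, sq_sqrt (by linarith)]
    nlinarith [sq_nonneg (ρ + √(1 - ρ ^ 2) * l), sq_sqrt (by linarith : 0 ≤ 1 - ρ ^ 2)]
  linarith [le_abs_self (√(1 - ρ ^ 2) - ρ * l), abs_le_sqrt hsq]

lemma abs_Nf'_le (ρ l : ℝ) : |Nf' ρ l| ≤ 1 + |ρ| := by
  have hs : 0 < √(l ^ 2 + 1) := sqrt_pos.2 (by positivity)
  have hl : |l / √(l ^ 2 + 1)| ≤ 1 := by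
    rw [abs_div, abs_of_pos hs, div_le_one hs]
    exact abs_le_sqrt (by linarith)
  calc |Nf' ρ l| ≤ |ρ| + |l / √(l ^ 2 + 1)| := abs_add_le _ _
    _ ≤ 1 + |ρ| := by linarith

lemma abs_mul_gf_le (hb : 0 ≤ b) (l : ℝ) : |b * gf ρ l| ≤ b * (1 + |ρ|) / 4 := by
  rw [gf, abs_mul, abs_of_nonneg hb, abs_div, abs_of_pos (four_pos : (0 : ℝ) < 4), mul_div_assoc]
  gcongr
  exact abs_Nf'_le ρ l

lemma Nf''_eq (l : ℝ) : Nf'' l = (√(l ^ 2 + 1) ^ 3)⁻¹ := by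
  have h0 : (0 : ℝ) ≤ l ^ 2 + 1 := by positivity
  rw [Nf'', show -(3 : ℝ) / 2 = -((1 / 2) * (3 : ℕ)) by norm_num, rpow_neg h0, rpow_mul h0,
    ← sqrt_eq_rpow, rpow_natCast]

lemma Nf''_pos (l : ℝ) : 0 < Nf'' l := by
  rw [Nf''_eq]
  positivity

lemma factors_pos_of_half_le_hf {l : ℝ} (hb : 0 ≤ b) (hb2 : b * (1 + |ρ|) < 2)
    (hh : 1 / 2 ≤ hf γ ρ μ l) : 0 < hf γ ρ μ l - b * gf ρ l ∧ 0 < hf γ ρ μ l + b * gf ρ l := by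
  have := abs_le.1 (abs_mul_gf_le (ρ := ρ) hb l)
  constructor <;> linarith

lemma G1_ge_of_half_le_hf {l : ℝ} (hb : 0 ≤ b) (hh : 1 / 2 ≤ hf γ ρ μ l) :
    (4 - b ^ 2 * (1 + |ρ|) ^ 2) / 16 ≤ G1 γ b ρ μ l := by
  obtain ⟨hg₁, hg₂⟩ := abs_le.1 (abs_mul_gf_le (ρ := ρ) hb l)
  have := sq_le_sq' hg₁ hg₂
  rw [G1]
  nlinarith

theorem arbitrageFree_of_half_le_hf {σ M : ℝ} (hb : 0 ≤ b) (hb2 : b * (1 + |ρ|) < 2)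
    (hh : ∀ l, 1 / 2 ≤ hf γ ρ μ l) (hM : ∀ l, -g2 γ ρ l ≤ M) (hM0 : 0 ≤ M)
    (hσ : σ ≥ 8 * b * M / (4 - b ^ 2 * (1 + |ρ|) ^ 2)) : ArbitrageFree γ b ρ μ σ := by
  have hD : 0 < 4 - b ^ 2 * (1 + |ρ|) ^ 2 := by
    nlinarith [abs_nonneg ρ, mul_nonneg hb (by positivity : (0 : ℝ) ≤ 1 + |ρ|)]
  have hσ0 : 0 ≤ σ := le_trans (by positivity) hσ
  have hbM : b / (2 * σ) * M ≤ (4 - b ^ 2 * (1 + |ρ|) ^ 2) / 16 := by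
    rw [div_mul_eq_mul_div]
    refine div_le_of_le_mul₀ (by positivity) (by positivity) ?_
    nlinarith [(div_le_iff₀ hD).1 hσ]
  refine ⟨fun l => factors_pos_of_half_le_hf hb hb2 (hh l), fun l => ?_⟩
  have hg2 : -(b / (2 * σ) * M) ≤ b / (2 * σ) * g2 γ ρ l := by
    nlinarith [mul_le_mul_of_nonneg_left (hM l) (by positivity : 0 ≤ b / (2 * σ))]
  linarith [G1_ge_of_half_le_hf hb (hh l) (b := b)]

lemma neg_g2_le (hγ : 0 < γ) (hρ : ρ ^ 2 ≤ 1) (l : ℝ) :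
    -g2 γ ρ l ≤ (1 + |ρ|) ^ 2 / (2 * γ) := by
  obtain ⟨hN'₁, hN'₂⟩ := abs_le.1 (abs_Nf'_le ρ l)
  have hN : γ ≤ Nf γ ρ l := by
    have := sqrt_one_sub_sq_le_mul_add_sqrt hρ l
    rw [Nf]
    linarith [sqrt_nonneg (1 - ρ ^ 2)]
  have := div_le_div₀ (by positivity) (sq_le_sq' hN'₁ hN'₂) (by positivity)
    (by linarith : 2 * γ ≤ 2 * Nf γ ρ l)
  linarith [Nf''_pos l, show -g2 γ ρ l = Nf' ρ l ^ 2 / (2 * Nf γ ρ l) - Nf'' l by rw [g2]; ring]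

lemma bddAbove_range_neg_g2 (hγ : 0 < γ) (hρ : ρ ^ 2 ≤ 1) :
    BddAbove (Set.range fun l => -g2 γ ρ l) :=
  ⟨_, Set.forall_mem_range.2 (neg_g2_le hγ hρ)⟩

/-- Far in the right wing `N' ≈ 1 + ρ` and `N ≈ (1 + ρ) l`, so `N'²/(2N) ≈ (1 + ρ)/(2l)` beats
`N'' ≈ 1/l³`; at `l = 5/(1+ρ)` the crude bounds `N' ≥ (1+ρ)/2` and `N ≤ 3√(l²+1)` already suffice. -/
lemma neg_g2_five_div_one_add_pos (hγ0 : 0 ≤ γ) (hγ1 : γ ≤ 1) (hρ1 : -1 < ρ) (hρ2 : ρ < 1) :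
    0 < -g2 γ ρ (5 / (1 + ρ)) := by
  set l := 5 / (1 + ρ)
  set s := √(l ^ 2 + 1)
  have hu : 0 < 1 + ρ := by linarith
  have hl5 : l * (1 + ρ) = 5 := div_mul_cancel₀ 5 hu.ne'
  have hl : 0 < l := by positivity
  have hs : s ^ 2 = l ^ 2 + 1 := sq_sqrt (by positivity)
  have hs0 : 0 < s := sqrt_pos.2 (by positivity)
  have hN_pos : 0 < Nf γ ρ l := by
    have := sqrt_one_sub_sq_le_mul_add_sqrt (by nlinarith : ρ ^ 2 ≤ 1) l
    rw [Nf]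
    linarith [sqrt_pos.2 (by nlinarith : 0 < 1 - ρ ^ 2)]
  have hN_le : Nf γ ρ l ≤ 3 * s := by
    rw [Nf]
    nlinarith
  have hN'_ge : (1 + ρ) / 2 ≤ Nf' ρ l := by
    have hwing : (1 - ρ) * s ≤ 2 * l := by
      refine (pow_le_pow_iff_left₀ (mul_nonneg (by linarith) hs0.le) (by positivity)
        two_ne_zero).1 ?_
      rw [mul_pow, hs]
      nlinarith [mul_pos hu hl]
    have : (1 - ρ) / 2 ≤ l / s := by
      rw [div_le_div_iff₀ two_pos hs0]
      linarith
    rw [Nf']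
    linarith
  have hkey : 2 * Nf γ ρ l < Nf' ρ l ^ 2 * s ^ 3 := by
    have h24 : 24 < (1 + ρ) ^ 2 * s ^ 2 := by nlinarith
    have : (1 + ρ) ^ 2 / 4 ≤ Nf' ρ l ^ 2 := by nlinarith
    nlinarith [mul_le_mul_of_nonneg_right this (by positivity : 0 ≤ s ^ 3)]
  rw [g2, Nf''_eq, neg_sub, sub_pos, inv_lt_iff_one_lt_mul₀ (by positivity), mul_comm,
    ← mul_div_assoc, one_lt_div (by positivity)]
  linarith

lemma hf_ssvi (hρ : ρ ^ 2 < 1) (l : ℝ) :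
    hf (√(1 - ρ ^ 2)) ρ (-ρ / √(1 - ρ ^ 2)) l = 1 / 2 + (2 * √(1 - ρ ^ 2) * √(l ^ 2 + 1))⁻¹ := by
  have hN : √(1 - ρ ^ 2) + ρ * l + √(l ^ 2 + 1) ≠ 0 := by
    have := sqrt_one_sub_sq_le_mul_add_sqrt hρ.le l
    linarith [sqrt_pos.2 (by linarith : 0 < 1 - ρ ^ 2)]
  have hγ : √(1 - ρ ^ 2) ^ 2 = 1 - ρ ^ 2 := sq_sqrt (by linarith)
  have hs : √(l ^ 2 + 1) ^ 2 = l ^ 2 + 1 := sq_sqrt (by positivity)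
  have hγ0 : √(1 - ρ ^ 2) ≠ 0 := (sqrt_pos.2 (by linarith)).ne'
  have hs0 : √(l ^ 2 + 1) ≠ 0 := (sqrt_pos.2 (by positivity)).ne'
  rw [hf, Nf', Nf]
  field_simp
  linear_combination √(l ^ 2 + 1) * hγ + √(1 - ρ ^ 2) * hs

lemma half_le_hf_ssvi (hρ : ρ ^ 2 < 1) (l : ℝ) :
    1 / 2 ≤ hf (√(1 - ρ ^ 2)) ρ (-ρ / √(1 - ρ ^ 2)) l := by
  rw [hf_ssvi hρ]
  exact le_add_of_nonneg_right (by positivity)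

end SVI

theorem ssvi_subdomain_general (ρ b σ : ℝ) (hρ : ρ ∈ Set.Ioo (-1 : ℝ) 1) (hb : 0 < b)
    (hb2 : b * (1 + |ρ|) < 2) :
    BddAbove (Set.range fun l => -g2 (Real.sqrt (1 - ρ ^ 2)) ρ l) ∧
    0 < sSup (Set.range fun l => -g2 (Real.sqrt (1 - ρ ^ 2)) ρ l) ∧
    (σ ≥ 8 * b * sSup (Set.range fun l => -g2 (Real.sqrt (1 - ρ ^ 2)) ρ l) /
        (4 - b ^ 2 * (1 + |ρ|) ^ 2) →
      ArbitrageFree (Real.sqrt (1 - ρ ^ 2)) b ρ (-ρ / Real.sqrt (1 - ρ ^ 2)) σ) := by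
  obtain ⟨hρ1, hρ2⟩ := hρ
  have hρsq : ρ ^ 2 < 1 := by nlinarith
  have hγ : 0 < √(1 - ρ ^ 2) := sqrt_pos.2 (by linarith)
  have hbdd := bddAbove_range_neg_g2 hγ hρsq.le
  have hM : 0 < sSup (Set.range fun l => -g2 (√(1 - ρ ^ 2)) ρ l) :=
    (neg_g2_five_div_one_add_pos hγ.le (sqrt_le_one.2 (by linarith [sq_nonneg ρ])) hρ1 hρ2).trans_le
      (le_csSup hbdd ⟨_, rfl⟩)
  exact ⟨hbdd, hM, arbitrageFree_of_half_le_hf hb.le hb2 (half_le_hf_ssvi hρsq)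
    (fun l => le_csSup hbdd ⟨l, rfl⟩) hM.le⟩

/-- explicit no-arbitrage sub-domain for SSVI. -/
theorem ssvi_subdomain (ρ b σ : ℝ) (hρ : ρ ∈ Set.Ioo (-1 : ℝ) 1) (hb : 0 < b)
    (hb2 : b * (1 + |ρ|) < 2) (hσ : 0 < σ) :
    BddAbove (Set.range fun l => -g2 (Real.sqrt (1 - ρ ^ 2)) ρ l) ∧
    0 < sSup (Set.range fun l => -g2 (Real.sqrt (1 - ρ ^ 2)) ρ l) ∧
    (σ ≥ 8 * b * sSup (Set.range fun l => -g2 (Real.sqrt (1 - ρ ^ 2)) ρ l) /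
        (4 - b ^ 2 * (1 + |ρ|) ^ 2) →
      ArbitrageFree (Real.sqrt (1 - ρ ^ 2)) b ρ (-ρ / Real.sqrt (1 - ρ ^ 2)) σ) :=
  ssvi_subdomain_general ρ b σ hρ hb hb2
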